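/- arXiv:2601.02513 — 6 statements merged into one kernel-verified Lean document; each statement's English description precedes it below -/
import Mathlib

section
/- Let c > 0 and U_n ∈ ℝ with −c < U_n < 0. Then γ = (U_n + c)/(U_n − c) satisfies γ² < −(U_n + c)/(U_n − c) < 1. Hence the inflow Bernoulli boundary condition is energy stable. -/
theorem bernoulli_inflow_stable (Un c : ℝ) (hc : 0 < c) (h1 : -c < Un) (h2 : Un < 0) :
    ((Un + c) / (Un - c)) ^ 2 < -(Un + c) / (Un - c) ∧ -(Un + c) / (Un - c) < 1 := by
  have hb : Un - c < 0 := by linarith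
  have ha : 0 < Un + c := by linarith
  have hbne : Un - c ≠ 0 := ne_of_lt hb
  have ht : -(Un + c) / (Un - c) = (Un + c) / (c - Un) := by
    rw [div_eq_div_iff hbne (by intro h; nlinarith : (c - Un) ≠ 0)]; ring
  have hcu : 0 < c - Un := by linarith
  have ht1 : (Un + c) / (c - Un) < 1 := (div_lt_one hcu).mpr (by linarith)
  have ht0 : 0 < (Un + c) / (c - Un) := div_pos ha hcu
  constructor
  · have hsq : ((Un + c) / (Un - c)) ^ 2 = ((Un + c) / (c - Un)) ^ 2 := by
      rw [div_pow, div_pow]; congr 1; ring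
    rw [hsq, ht]
    nlinarith
  · rw [ht]; exact ht1
end

section
/- Let c > 0 and 0 < U_n < c. Then γ = (U_n + c)/(U_n − c) satisfies γ² > −(U_n + c)/(U_n − c) > 1, so the strictly-outflow Bernoulli boundary condition violates the linear energy stability criterion. -/
theorem bernoulli_outflow_unstable (Un c : ℝ) (hc : 0 < c) (h1 : 0 < Un) (h2 : Un < c) :
    ((Un + c) / (Un - c)) ^ 2 > -(Un + c) / (Un - c) ∧ -(Un + c) / (Un - c) > 1 := by
  have hpos : 0 < c - Un := by linarith
  have hr : -(Un + c) / (Un - c) = (Un + c) / (c - Un) := by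
    rw [div_eq_div_iff (by linarith : Un - c ≠ 0) (by linarith : c - Un ≠ 0)]; ring
  have h1' : -(Un + c) / (Un - c) > 1 := by
    rw [hr, gt_iff_lt, lt_div_iff₀ hpos]; linarith
  refine ⟨?_, h1'⟩
  have hsq : ((Un + c) / (Un - c)) ^ 2 = (-(Un + c) / (Un - c)) ^ 2 := by ring
  rw [hsq]
  nlinarith [h1']
end

section
/- Let h > 0, u, v ∈ ℝ, g > 0, and suppose u² + v² < g h (subcritical flow). Then the elemental energy e(h, u, v) = (1/2) h (u² + v²) + (1/2) g h², viewed as a function of the variables (h, u, v), has positive-definite Hessian at (h, u, v); i.e., e is strictly convex in a neighborhood of every subcritical state. -/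
/-!
Multiplied by `g`, the Hessian quadratic form of `e` at `(h, u, v)` becomes
`(g x₀ + u x₁ + v x₂)² + (u x₂ - v x₁)² + (g h - u² - v²)(x₁² + x₂²)`, which is positive
definite exactly in the subcritical regime. Since `e` is cubic, its convexity defect
`a e(p) + b e(q) - e(a p + b q)` is `a b / 2` times the Hessian form at the (non-convex-combination)
point `(a h₁ + b h₂, (u₁ + u₂) / 2, (v₁ + v₂) / 2)`, applied to `p - q`. On a set
`{h > c, u² + v² < g c}` this point is again subcritical, so `e` is strictly convex there.
-/

open Set

noncomputable def energy (g : ℝ) (p : ℝ × ℝ × ℝ) : ℝ :=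
  1 / 2 * p.1 * (p.2.1 ^ 2 + p.2.2 ^ 2) + 1 / 2 * g * p.1 ^ 2

noncomputable def energyHessianForm (g : ℝ) (p x : ℝ × ℝ × ℝ) : ℝ :=
  g * x.1 ^ 2 + 2 * p.2.1 * x.1 * x.2.1 + 2 * p.2.2 * x.1 * x.2.2 + p.1 * (x.2.1 ^ 2 + x.2.2 ^ 2)

theorem energyHessianForm_pos {g : ℝ} {p x : ℝ × ℝ × ℝ} (hg : 0 < g)
    (hp : p.2.1 ^ 2 + p.2.2 ^ 2 < g * p.1) (hx : x ≠ 0) : 0 < energyHessianForm g p x := by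
  obtain ⟨h, u, v⟩ := p
  obtain ⟨x₀, x₁, x₂⟩ := x
  have key : g * energyHessianForm g (h, u, v) (x₀, x₁, x₂) = (g * x₀ + u * x₁ + v * x₂) ^ 2
      + (u * x₂ - v * x₁) ^ 2 + (g * h - (u ^ 2 + v ^ 2)) * (x₁ ^ 2 + x₂ ^ 2) := by
    simp only [energyHessianForm]; ring
  refine pos_of_mul_pos_right (key ▸ ?_) hg.le
  by_cases hx' : x₁ = 0 ∧ x₂ = 0
  · obtain ⟨rfl, rfl⟩ := hx'
    have : x₀ ≠ 0 := by rintro rfl; exact hx rfl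
    simp only [mul_zero, add_zero, sub_zero, zero_pow two_ne_zero]
    positivity
  · have : 0 < x₁ ^ 2 + x₂ ^ 2 := by
      rcases not_and_or.mp hx' with h₁ | h₂
      · positivity
      · positivity
    have := mul_pos (sub_pos.mpr hp) this
    positivity

theorem posDef_energyHessian {g h u v : ℝ} (hg : 0 < g) (hsub : u ^ 2 + v ^ 2 < g * h) :
    Matrix.PosDef (!![g, u, v; u, h, 0; v, 0, h] : Matrix (Fin 3) (Fin 3) ℝ) := by
  refine Matrix.posDef_iff_dotProduct_mulVec.mpr ⟨?_, fun x hx => ?_⟩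
  · ext i j
    fin_cases i <;> fin_cases j <;> rfl
  · have hx' : (x 0, x 1, x 2) ≠ 0 := by
      intro h0
      simp only [Prod.mk_eq_zero] at h0
      exact hx (by ext i; fin_cases i <;> simp [h0])
    have expand : star x ⬝ᵥ (Matrix.mulVec !![g, u, v; u, h, 0; v, 0, h] x) =
        energyHessianForm g (h, u, v) (x 0, x 1, x 2) := by
      simp [energyHessianForm, dotProduct, Matrix.mulVec, Fin.sum_univ_three]
      ring
    exact expand ▸ energyHessianForm_pos hg hsub hx'

theorem convexOn_sq_add_sq : ConvexOn ℝ univ (fun w : ℝ × ℝ => w.1 ^ 2 + w.2 ^ 2) := by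
  have hsq : ConvexOn ℝ univ fun x : ℝ => x ^ 2 := even_two.convexOn_pow
  exact (hsq.comp_linearMap (LinearMap.fst ℝ ℝ ℝ)).add
    (hsq.comp_linearMap (LinearMap.snd ℝ ℝ ℝ))

theorem convex_sq_add_sq_lt (r : ℝ) : Convex ℝ {w : ℝ × ℝ | w.1 ^ 2 + w.2 ^ 2 < r} := by
  simpa using convexOn_sq_add_sq.convex_lt r

theorem energy_convexity_gap (g a b : ℝ) (hab : a + b = 1) (p q : ℝ × ℝ × ℝ) :
    a * energy g p + b * energy g q - energy g (a • p + b • q) =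
      a * b / 2 * energyHessianForm g
        (a * p.1 + b * q.1, (p.2.1 + q.2.1) / 2, (p.2.2 + q.2.2) / 2) (p - q) := by
  obtain rfl : b = 1 - a := by linarith
  simp only [energy, energyHessianForm, Prod.fst_add, Prod.snd_add, Prod.smul_fst,
    Prod.smul_snd, Prod.fst_sub, Prod.snd_sub, smul_eq_mul]
  ring

theorem strictConvexOn_energy {g : ℝ} (hg : 0 < g) (c : ℝ) :
    StrictConvexOn ℝ (Ioi c ×ˢ {w : ℝ × ℝ | w.1 ^ 2 + w.2 ^ 2 < g * c}) (energy g) := by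
  refine ⟨(convex_Ioi c).prod (convex_sq_add_sq_lt _), ?_⟩
  rintro p ⟨hp₁, hp₂ : p.2.1 ^ 2 + p.2.2 ^ 2 < g * c⟩ q ⟨hq₁, hq₂ : q.2.1 ^ 2 + q.2.2 ^ 2 < g * c⟩
    hpq a b ha hb hab
  have hdepth : c < a * p.1 + b * q.1 := convex_Ioi c hp₁ hq₁ ha.le hb.le hab
  have hmid : ((p.2.1 + q.2.1) / 2) ^ 2 + ((p.2.2 + q.2.2) / 2) ^ 2 < g * (a * p.1 + b * q.1) :=
    calc ((p.2.1 + q.2.1) / 2) ^ 2 + ((p.2.2 + q.2.2) / 2) ^ 2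
        ≤ ((p.2.1 ^ 2 + p.2.2 ^ 2) + (q.2.1 ^ 2 + q.2.2 ^ 2)) / 2 := by
          nlinarith [sq_nonneg (p.2.1 - q.2.1), sq_nonneg (p.2.2 - q.2.2)]
      _ < g * c := by linarith
      _ < g * (a * p.1 + b * q.1) := mul_lt_mul_of_pos_left hdepth hg
  have hgap := energy_convexity_gap g a b hab p q
  have hform := energyHessianForm_pos (p := (_, _, _)) hg hmid (sub_ne_zero.mpr hpq)
  simp only [smul_eq_mul]
  linarith [mul_pos (mul_pos ha hb) hform]

theorem elemental_energy_strictly_convex_general (g h u v : ℝ) (hg : 0 < g)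
    (hsub : u ^ 2 + v ^ 2 < g * h) :
    Matrix.PosDef (!![g, u, v; u, h, 0; v, 0, h] : Matrix (Fin 3) (Fin 3) ℝ) ∧
    ∃ s : Set (ℝ × ℝ × ℝ), s ∈ nhds (h, u, v) ∧
      StrictConvexOn ℝ s
        (fun p : ℝ × ℝ × ℝ =>
          (1 / 2) * p.1 * (p.2.1 ^ 2 + p.2.2 ^ 2) + (1 / 2) * g * p.1 ^ 2) := by
  refine ⟨posDef_energyHessian hg hsub, ?_⟩
  obtain ⟨c, hvc, hch⟩ := exists_between ((div_lt_iff₀' hg).mpr hsub)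
  have hopen : IsOpen (Ioi c ×ˢ {w : ℝ × ℝ | w.1 ^ 2 + w.2 ^ 2 < g * c}) :=
    isOpen_Ioi.prod (isOpen_lt (by fun_prop) continuous_const)
  exact ⟨_, hopen.mem_nhds ⟨hch, (div_lt_iff₀' hg).mp hvc⟩, strictConvexOn_energy hg c⟩

theorem elemental_energy_strictly_convex (g h u v : ℝ) (hg : 0 < g) (hh : 0 < h)
    (hsub : u ^ 2 + v ^ 2 < g * h) :
    Matrix.PosDef (!![g, u, v; u, h, 0; v, 0, h] : Matrix (Fin 3) (Fin 3) ℝ) ∧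
    ∃ s : Set (ℝ × ℝ × ℝ), s ∈ nhds (h, u, v) ∧
      StrictConvexOn ℝ s
        (fun p : ℝ × ℝ × ℝ =>
          (1 / 2) * p.1 * (p.2.1 ^ 2 + p.2.2 ^ 2) + (1 / 2) * g * p.1 ^ 2) :=
  elemental_energy_strictly_convex_general g h u v hg hsub
end

section
/- Let h, u, v : ℝ² → ℝ be C¹ functions with h > 0, and define F = h·(u,v), G = (1/2)(u² + v²) + g h, ω = ∂v/∂x − ∂u/∂y + f_c, and e = (1/2) h (u²+v²) + (1/2) g h². If ∂h/∂t + div F = 0 and ∂(u,v)/∂t + ω·(−v, u) + ∇G = 0, then ∂e/∂t + div(G F) = 0. -/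
/-- Partial derivative in time of a field `f t x y`. -/
noncomputable def pt (f : ℝ → ℝ → ℝ → ℝ) (t x y : ℝ) : ℝ :=
  deriv (fun s => f s x y) t

/-- Partial derivative in `x` of a field `f t x y`. -/
noncomputable def px (f : ℝ → ℝ → ℝ → ℝ) (t x y : ℝ) : ℝ :=
  deriv (fun s => f t s y) x

/-- Partial derivative in `y` of a field `f t x y`. -/
noncomputable def py (f : ℝ → ℝ → ℝ → ℝ) (t x y : ℝ) : ℝ :=
  deriv (fun s => f t x s) y

/-!
The energy density `e = ½ h (u² + v²) + ½ g h²` satisfies `∂e = G ∂h + F₁ ∂u + F₂ ∂v` in every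
direction, where `G = ½ (u² + v²) + g h` and `F = h (u, v)`. Hence `∂ₜe + div (G F)` equals
`G (∂ₜh + div F) + F · (∂ₜ(u, v) + ∇G)`, which vanishes by the mass and momentum equations
because the vorticity term `ω (-v, u)` is orthogonal to `F`.
-/

section Slices

variable {f : ℝ → ℝ → ℝ → ℝ} {t x y : ℝ}
  (hf : DifferentiableAt ℝ (fun p : ℝ × ℝ × ℝ => f p.1 p.2.1 p.2.2) (t, x, y))
include hf

theorem hasDerivAt_pt : HasDerivAt (fun s => f s x y) (pt f t x y) t :=
  (hf.comp (f := fun s : ℝ => (s, x, y)) t (by fun_prop)).hasDerivAt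

theorem hasDerivAt_px : HasDerivAt (fun s => f t s y) (px f t x y) x :=
  (hf.comp (f := fun s : ℝ => (t, s, y)) x (by fun_prop)).hasDerivAt

theorem hasDerivAt_py : HasDerivAt (fun s => f t x s) (py f t x y) y :=
  (hf.comp (f := fun s : ℝ => (t, x, s)) y (by fun_prop)).hasDerivAt

end Slices

section EnergyDerivatives

variable {h u v : ℝ → ℝ} {h' u' v' s : ℝ} (g : ℝ)
  (hh : HasDerivAt h h' s) (hu : HasDerivAt u u' s) (hv : HasDerivAt v v' s)
include hh hu hv

theorem HasDerivAt.bernoulli :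
    HasDerivAt (fun s => 1 / 2 * (u s ^ 2 + v s ^ 2) + g * h s)
      (u s * u' + v s * v' + g * h') s :=
  ((((hu.fun_pow 2).fun_add (hv.fun_pow 2)).const_mul (1 / 2)).fun_add
    (hh.const_mul g)).congr_deriv (by ring)

theorem HasDerivAt.shallowWaterEnergy :
    HasDerivAt (fun s => 1 / 2 * h s * (u s ^ 2 + v s ^ 2) + 1 / 2 * g * h s ^ 2)
      ((1 / 2 * (u s ^ 2 + v s ^ 2) + g * h s) * h' + h s * u s * u' + h s * v s * v') s :=
  (((hh.const_mul (1 / 2)).fun_mul ((hu.fun_pow 2).fun_add (hv.fun_pow 2))).fun_add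
    ((hh.fun_pow 2).const_mul (1 / 2 * g))).congr_deriv (by ring)

end EnergyDerivatives

theorem nonlinear_energy_continuity_general (g : ℝ)
    (h u v : ℝ → ℝ → ℝ → ℝ)
    (hC1h : ContDiff ℝ 1 (fun p : ℝ × ℝ × ℝ => h p.1 p.2.1 p.2.2))
    (hC1u : ContDiff ℝ 1 (fun p : ℝ × ℝ × ℝ => u p.1 p.2.1 p.2.2))
    (hC1v : ContDiff ℝ 1 (fun p : ℝ × ℝ × ℝ => v p.1 p.2.1 p.2.2))
    (F1 F2 G ω e : ℝ → ℝ → ℝ → ℝ)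
    (hF1 : ∀ t x y, F1 t x y = h t x y * u t x y)
    (hF2 : ∀ t x y, F2 t x y = h t x y * v t x y)
    (hG : ∀ t x y, G t x y = (1 / 2) * (u t x y ^ 2 + v t x y ^ 2) + g * h t x y)
    (he : ∀ t x y,
      e t x y = (1 / 2) * h t x y * (u t x y ^ 2 + v t x y ^ 2)
        + (1 / 2) * g * h t x y ^ 2)
    (mass : ∀ t x y, pt h t x y + px F1 t x y + py F2 t x y = 0)
    (momu : ∀ t x y, pt u t x y + ω t x y * (-(v t x y)) + px G t x y = 0)
    (momv : ∀ t x y, pt v t x y + ω t x y * u t x y + py G t x y = 0) :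
    ∀ t x y,
      pt e t x y + px (fun t x y => G t x y * F1 t x y) t x y
        + py (fun t x y => G t x y * F2 t x y) t x y = 0 := by
  obtain rfl : F1 = _ := funext fun t => funext fun x => funext (hF1 t x)
  obtain rfl : F2 = _ := funext fun t => funext fun x => funext (hF2 t x)
  obtain rfl : G = _ := funext fun t => funext fun x => funext (hG t x)
  obtain rfl : e = _ := funext fun t => funext fun x => funext (he t x)
  intro t x y
  have dh := hC1h.differentiable one_ne_zero
  have du := hC1u.differentiable one_ne_zero
  have dv := hC1v.differentiable one_ne_zero
  have hht := hasDerivAt_pt (dh (t, x, y))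
  have hhx := hasDerivAt_px (dh (t, x, y))
  have hhy := hasDerivAt_py (dh (t, x, y))
  have hux := hasDerivAt_px (du (t, x, y))
  have huy := hasDerivAt_py (du (t, x, y))
  have hvx := hasDerivAt_px (dv (t, x, y))
  have hvy := hasDerivAt_py (dv (t, x, y))
  have mass_xy := mass t x y
  rw [px, (hhx.fun_mul hux).deriv, py, (hhy.fun_mul hvy).deriv] at mass_xy
  have momu_xy := momu t x y
  rw [px, (hhx.bernoulli g hux hvx).deriv] at momu_xy
  have momv_xy := momv t x y
  rw [py, (hhy.bernoulli g huy hvy).deriv] at momv_xy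
  simp only [pt, px, py]
  rw [(hht.shallowWaterEnergy g (hasDerivAt_pt (du _)) (hasDerivAt_pt (dv _))).deriv,
    ((hhx.bernoulli g hux hvx).fun_mul (hhx.fun_mul hux)).deriv,
    ((hhy.bernoulli g huy hvy).fun_mul (hhy.fun_mul hvy)).deriv]
  linear_combination (1 / 2 * (u t x y ^ 2 + v t x y ^ 2) + g * h t x y) * mass_xy
    + h t x y * u t x y * momu_xy + h t x y * v t x y * momv_xy

theorem nonlinear_energy_continuity (g fc : ℝ) (hg : 0 < g)
    (h u v : ℝ → ℝ → ℝ → ℝ)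
    (hC1h : ContDiff ℝ 1 (fun p : ℝ × ℝ × ℝ => h p.1 p.2.1 p.2.2))
    (hC1u : ContDiff ℝ 1 (fun p : ℝ × ℝ × ℝ => u p.1 p.2.1 p.2.2))
    (hC1v : ContDiff ℝ 1 (fun p : ℝ × ℝ × ℝ => v p.1 p.2.1 p.2.2))
    (hpos : ∀ t x y, 0 < h t x y)
    (F1 F2 G ω e : ℝ → ℝ → ℝ → ℝ)
    (hF1 : ∀ t x y, F1 t x y = h t x y * u t x y)
    (hF2 : ∀ t x y, F2 t x y = h t x y * v t x y)
    (hG : ∀ t x y, G t x y = (1 / 2) * (u t x y ^ 2 + v t x y ^ 2) + g * h t x y)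
    (hω : ∀ t x y, ω t x y = px v t x y - py u t x y + fc)
    (he : ∀ t x y,
      e t x y = (1 / 2) * h t x y * (u t x y ^ 2 + v t x y ^ 2)
        + (1 / 2) * g * h t x y ^ 2)
    (mass : ∀ t x y, pt h t x y + px F1 t x y + py F2 t x y = 0)
    (momu : ∀ t x y, pt u t x y + ω t x y * (-(v t x y)) + px G t x y = 0)
    (momv : ∀ t x y, pt v t x y + ω t x y * u t x y + py G t x y = 0) :
    ∀ t x y,
      pt e t x y + px (fun t x y => G t x y * F1 t x y) t x y
        + py (fun t x y => G t x y * F2 t x y) t x y = 0 :=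
  nonlinear_energy_continuity_general g h u v hC1h hC1u hC1v F1 F2 G ω e hF1 hF2 hG he mass momu
    momv
end

section
/- Let λ₁ > 0, λ₂ < 0, γ ∈ ℝ with γ² ≤ −λ₁/λ₂, and λ₃ ∈ ℝ. Set penalty parameters τ_n = λ₂, τ_h = γ λ₂, and τ_s ≥ 1. Then for all w₁, w₂, w₃ ∈ ℝ: (i) if λ₃ < 0, −(λ₁ w₁² + λ₂ w₂² + λ₃ w₃²) + τ_h w₁(w₂ − γ w₁) + τ_n w₂(w₂ − γ w₁) + τ_s λ₃ w₃² ≤ 0; (ii) if λ₃ ≥ 0, −(λ₁ w₁² + λ₂ w₂² + λ₃ w₃²) + τ_h w₁(w₂ − γ w₁) + τ_n w₂(w₂ − γ w₁) ≤ 0. -/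
theorem linear_sat_boundary_term_nonpositive (l1 l2 l3 γ τs : ℝ)
    (h1 : 0 < l1) (h2 : l2 < 0) (hγ : γ ^ 2 ≤ -l1 / l2) (hτs : 1 ≤ τs) :
    let τn : ℝ := l2
    let τh : ℝ := γ * l2
    (∀ w1 w2 w3 : ℝ, l3 < 0 →
      -(l1 * w1 ^ 2 + l2 * w2 ^ 2 + l3 * w3 ^ 2)
        + τh * w1 * (w2 - γ * w1) + τn * w2 * (w2 - γ * w1) + τs * l3 * w3 ^ 2 ≤ 0) ∧
    (∀ w1 w2 w3 : ℝ, 0 ≤ l3 →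
      -(l1 * w1 ^ 2 + l2 * w2 ^ 2 + l3 * w3 ^ 2)
        + τh * w1 * (w2 - γ * w1) + τn * w2 * (w2 - γ * w1) ≤ 0) := by
  intro τn τh
  have hτn : τn = l2 := rfl
  have hτh : τh = γ * l2 := rfl
  have hcancel : -l1 / l2 * l2 = -l1 := div_mul_cancel₀ _ (ne_of_lt h2)
  have key : 0 ≤ l1 + γ ^ 2 * l2 := by
    have := mul_le_mul_of_nonpos_right hγ (le_of_lt h2)
    linarith
  constructor
  · intro w1 w2 w3 hl3
    have h3 : (τs - 1) * l3 ≤ 0 := mul_nonpos_of_nonneg_of_nonpos (by linarith) (le_of_lt hl3)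
    rw [hτn, hτh]
    have e : -(l1 * w1 ^ 2 + l2 * w2 ^ 2 + l3 * w3 ^ 2)
        + γ * l2 * w1 * (w2 - γ * w1) + l2 * w2 * (w2 - γ * w1) + τs * l3 * w3 ^ 2
        = -((l1 + γ ^ 2 * l2) * w1 ^ 2) + ((τs - 1) * l3) * w3 ^ 2 := by ring
    rw [e]
    have := mul_nonneg key (sq_nonneg w1)
    have := mul_nonpos_of_nonpos_of_nonneg h3 (sq_nonneg w3)
    linarith
  · intro w1 w2 w3 hl3
    rw [hτn, hτh]
    have e : -(l1 * w1 ^ 2 + l2 * w2 ^ 2 + l3 * w3 ^ 2)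
        + γ * l2 * w1 * (w2 - γ * w1) + l2 * w2 * (w2 - γ * w1)
        = -((l1 + γ ^ 2 * l2) * w1 ^ 2) - l3 * w3 ^ 2 := by ring
    rw [e]
    have := mul_nonneg key (sq_nonneg w1)
    have := mul_nonneg hl3 (sq_nonneg w3)
    linarith
end

section
/- Let g, h > 0, u_n, u_s ∈ ℝ, and set F_n = h u_n, G_n = (1/2)u_n² + g h, G = G_n + (1/2)u_s². Suppose α > 0, β > 0, and choose τ_h = −1/(2β), τ_n = 1/(2α), τ_s ≥ 1/2. Then for u_n < 0: −G F_n + τ_h G(α G_n − β F_n) + τ_n F_n(α G_n − β F_n) + τ_s h u_n u_s² = −(α/(2β)) G G_n − (β/(2α)) F_n² + (τ_s − 1/4) h u_n u_s² ≤ 0; and for u_n ≥ 0: −G F_n + τ_h G(α G_n − β F_n) + τ_n F_n(α G_n − β F_n) = −(α/(2β)) G G_n − (β/(2α)) F_n² − (1/4) h u_n u_s² ≤ 0. -/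
theorem nonlinear_sat_boundary_term_case3 (g h un us α β τs : ℝ)
    (hg : 0 < g) (hh : 0 < h) (hα : 0 < α) (hβ : 0 < β) (hτs : 1 / 2 ≤ τs) :
    let Fn : ℝ := h * un
    let Gn : ℝ := (1 / 2) * un ^ 2 + g * h
    let G : ℝ := Gn + (1 / 2) * us ^ 2
    let τh : ℝ := -1 / (2 * β)
    let τn : ℝ := 1 / (2 * α)
    (un < 0 →
      -(G * Fn) + τh * G * (α * Gn - β * Fn) + τn * Fn * (α * Gn - β * Fn)
          + τs * h * un * us ^ 2
        = -(α / (2 * β)) * G * Gn - (β / (2 * α)) * Fn ^ 2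
          + (τs - 1 / 4) * h * un * us ^ 2 ∧
      -(α / (2 * β)) * G * Gn - (β / (2 * α)) * Fn ^ 2
          + (τs - 1 / 4) * h * un * us ^ 2 ≤ 0) ∧
    (0 ≤ un →
      -(G * Fn) + τh * G * (α * Gn - β * Fn) + τn * Fn * (α * Gn - β * Fn)
        = -(α / (2 * β)) * G * Gn - (β / (2 * α)) * Fn ^ 2
          - (1 / 4) * h * un * us ^ 2 ∧
      -(α / (2 * β)) * G * Gn - (β / (2 * α)) * Fn ^ 2
          - (1 / 4) * h * un * us ^ 2 ≤ 0) := by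
  intro Fn Gn G τh τn
  have hGn : 0 < Gn := by positivity
  have hG : 0 < G := by positivity
  have h1 : 0 ≤ α / (2 * β) * G * Gn := by positivity
  have h2 : 0 ≤ β / (2 * α) * Fn ^ 2 := by positivity
  constructor
  · intro hun
    constructor
    · show -(G * Fn) + (-1 / (2 * β)) * G * (α * Gn - β * Fn)
          + (1 / (2 * α)) * Fn * (α * Gn - β * Fn) + τs * h * un * us ^ 2 = _
      field_simp
      ring
    · have h3 : (τs - 1 / 4) * h * un * us ^ 2 ≤ 0 := by
        apply mul_nonpos_of_nonpos_of_nonneg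
        · apply mul_nonpos_of_nonneg_of_nonpos
          · nlinarith
          · exact hun.le
        · positivity
      nlinarith
  · intro hun
    constructor
    · show -(G * Fn) + (-1 / (2 * β)) * G * (α * Gn - β * Fn)
          + (1 / (2 * α)) * Fn * (α * Gn - β * Fn) = _
      field_simp
      ring
    · have h3 : 0 ≤ (1 / 4) * h * un * us ^ 2 := by positivity
      nlinarith
end
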